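/- arXiv:2507.13559 — 2 statements merged into one kernel-verified Lean document; each statement's English description precedes it below -/
import Mathlib

section
/- (Győri–Ladas) Let $\ell \geq 2$ be an integer and $(Q_n)$ a nonnegative real sequence. If either $\liminf_{n\to\infty} \sum_{s=n+1}^{n+\ell-1} Q_s > \left(\frac{\ell-1}{\ell}\right)^{\ell}$ or $\limsup_{n\to\infty} \sum_{s=n}^{n+\ell-1} Q_s > 1$, then every solution of the advanced difference equation $\Delta y_n - Q_n y_{n+\ell} = 0$ is oscillatory. -/
/-! A nonoscillatory solution can be taken eventually positive, since the equation is linear, and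
it is then eventually nondecreasing. Telescoping gives
`x (n + ℓ) - x n = ∑ Q s x (s + ℓ) ≥ (∑ Q s) x (n + ℓ)`, so the sums `∑_{s=n}^{n+ℓ-1} Q s` stay
below `1`. For the other criterion let `w n = x (n + ℓ) / x (n + 1) ≥ 1`. Then
`x (n + 1) / x (n + ℓ) = ∏_{j=n+1}^{n+ℓ-1} (1 - Q j w j)`, and AM–GM applied to these `ℓ - 1`
factors together with `∑ Q j w j` yields `∑ Q j w j ≤ ((ℓ - 1) / ℓ) ^ ℓ w n`. If the sums
`∑_{s=n+1}^{n+ℓ-1} Q s` eventually exceed `c > ((ℓ - 1) / ℓ) ^ ℓ`, any lower bound `a` of `w` on a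
tail improves to `c / ((ℓ - 1) / ℓ) ^ ℓ * a`, so `w` would exceed every power of this ratio `> 1`.
-/

open Finset Filter

theorem Int.sum_Ico_sub {G : Type*} [AddCommGroup G] (f : ℤ → G) {a b : ℤ} (hab : a ≤ b) :
    ∑ i ∈ Ico a b, (f (i + 1) - f i) = f b - f a := by
  induction b, hab using Int.leInduction with
  | base => simp
  | succ n hn ih =>
    rw [← sum_Ico_add_eq_sum_Ico_add_one hn, ih, sub_add_sub_cancel']

theorem Int.eq_mul_prod_Ico_div {K : Type*} [Field K] {f : ℤ → K} {a b : ℤ} (hab : a ≤ b)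
    (hf : ∀ i ∈ Ico a b, f (i + 1) ≠ 0) : f a = f b * ∏ i ∈ Ico a b, f i / f (i + 1) := by
  induction b, hab using Int.leInduction with
  | base => simp
  | succ n hn ih =>
    have hn1 : f (n + 1) ≠ 0 := hf n (by simp [hn])
    rw [← prod_Ico_mul_eq_prod_Ico_add_one hn, ih fun i hi => hf i (by simp at hi ⊢; omega)]
    field_simp

theorem Real.prod_le_sum_div_card_pow {ι : Type*} (s : Finset ι) {z : ι → ℝ}
    (hz : ∀ i ∈ s, 0 ≤ z i) : ∏ i ∈ s, z i ≤ ((∑ i ∈ s, z i) / #s) ^ #s := by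
  rcases s.eq_empty_or_nonempty with rfl | hs
  · simp
  have hcard : (0 : ℝ) < #s := by exact_mod_cast hs.card_pos
  have h := Real.geom_mean_le_arith_mean s (fun _ => 1) z (fun _ _ => zero_le_one)
    (by simpa using hs) hz
  simp only [Real.rpow_one, sum_const, nsmul_eq_mul, mul_one, one_mul] at h
  calc ∏ i ∈ s, z i = ((∏ i ∈ s, z i) ^ (#s : ℝ)⁻¹) ^ #s := by
        rw [← Real.rpow_natCast, ← Real.rpow_mul (prod_nonneg hz), inv_mul_cancel₀ hcard.ne',
          Real.rpow_one]
    _ ≤ ((∑ i ∈ s, z i) / #s) ^ #s := by gcongr; exact Real.rpow_nonneg (prod_nonneg hz) _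

theorem Real.sum_mul_prod_one_sub_le {ι : Type*} (s : Finset ι) {u : ι → ℝ}
    (hu₀ : ∀ i ∈ s, 0 ≤ u i) (hu₁ : ∀ i ∈ s, u i ≤ 1) :
    (∑ i ∈ s, u i) * ∏ i ∈ s, (1 - u i) ≤ (#s / (#s + 1 : ℝ)) ^ (#s + 1) := by
  let z : Option ι → ℝ := fun o => o.elim (∑ i ∈ s, u i) fun i => 1 - u i
  have hz : ∀ o ∈ s.insertNone, 0 ≤ z o := by
    simp only [forall_mem_insertNone, z, Option.elim]
    exact ⟨sum_nonneg hu₀, fun i hi => sub_nonneg.mpr (hu₁ i hi)⟩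
  have h := Real.prod_le_sum_div_card_pow s.insertNone hz
  simp only [prod_insertNone, sum_insertNone, card_insertNone, z, Option.elim, sum_sub_distrib,
    sum_const, nsmul_eq_mul, mul_one, add_sub_cancel] at h
  simpa using h

section AdvancedDifferenceEquation

variable {ℓ : ℕ} {Q x : ℤ → ℝ} {M : ℤ}

theorem monotoneOn_of_advanced_eq (hQ : ∀ n, 0 ≤ Q n)
    (heq : ∀ n, x (n + 1) - x n - Q n * x (n + ℓ) = 0) (hpos : ∀ n, M ≤ n → 0 < x n) :
    MonotoneOn x (Set.Ici M) := by
  refine monotoneOn_of_le_add_one Set.ordConnected_Ici fun n _ hn _ => ?_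
  have := mul_nonneg (hQ n) (hpos (n + ℓ) (by simp at hn; omega)).le
  linarith [heq n]

theorem sum_Ico_lt_one_of_advanced_eq (hQ : ∀ n, 0 ≤ Q n)
    (heq : ∀ n, x (n + 1) - x n - Q n * x (n + ℓ) = 0) (hpos : ∀ n, M ≤ n → 0 < x n)
    {n : ℤ} (hn : M ≤ n) : ∑ s ∈ Ico n (n + ℓ), Q s < 1 := by
  have hmono := monotoneOn_of_advanced_eq hQ heq hpos
  have hxℓ : 0 < x (n + ℓ) := hpos _ (by omega)
  have htel : x (n + ℓ) - x n = ∑ s ∈ Ico n (n + ℓ), Q s * x (s + ℓ) := by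
    rw [← Int.sum_Ico_sub x (by omega)]
    exact sum_congr rfl fun s _ => by linarith [heq s]
  have hle : (∑ s ∈ Ico n (n + ℓ), Q s) * x (n + ℓ) ≤ ∑ s ∈ Ico n (n + ℓ), Q s * x (s + ℓ) := by
    rw [sum_mul]
    refine sum_le_sum fun s hs => mul_le_mul_of_nonneg_left ?_ (hQ s)
    simp only [mem_Ico] at hs
    exact hmono (Set.mem_Ici.mpr (by omega)) (Set.mem_Ici.mpr (by omega)) (by omega)
  refine (mul_lt_iff_lt_one_left hxℓ).mp ?_
  linarith [hpos n hn]

theorem limsup_sum_Ico_le_one_of_advanced_eq (hQ : ∀ n, 0 ≤ Q n)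
    (heq : ∀ n, x (n + 1) - x n - Q n * x (n + ℓ) = 0) (hpos : ∀ n, M ≤ n → 0 < x n) :
    limsup (fun n : ℤ => ∑ s ∈ Ico n (n + ℓ), Q s) atTop ≤ 1 := by
  refine limsup_le_of_le ?_ (eventually_atTop.mpr ⟨M, fun n hn =>
    (sum_Ico_lt_one_of_advanced_eq hQ heq hpos hn).le⟩)
  exact isBoundedUnder_of ⟨0, fun n => sum_nonneg fun s _ => hQ s⟩ |>.isCoboundedUnder_le

theorem one_sub_mul_div_of_advanced_eq (heq : ∀ n, x (n + 1) - x n - Q n * x (n + ℓ) = 0)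
    {j : ℤ} (hj : x (j + 1) ≠ 0) : 1 - Q j * (x (j + ℓ) / x (j + 1)) = x j / x (j + 1) := by
  field_simp
  linarith [heq j]

theorem sum_Ico_mul_div_le_of_advanced_eq (hℓ : 1 ≤ ℓ) (hQ : ∀ n, 0 ≤ Q n)
    (heq : ∀ n, x (n + 1) - x n - Q n * x (n + ℓ) = 0) (hpos : ∀ n, M ≤ n → 0 < x n)
    {n : ℤ} (hn : M ≤ n) :
    ∑ j ∈ Ico (n + 1) (n + ℓ), Q j * (x (j + ℓ) / x (j + 1)) ≤
      (((ℓ : ℝ) - 1) / ℓ) ^ ℓ * (x (n + ℓ) / x (n + 1)) := by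
  set s := Ico (n + 1) (n + ℓ)
  have hmem : ∀ j ∈ s, M ≤ j := fun j hj => by simp only [s, mem_Ico] at hj; omega
  have hratio : ∀ j ∈ s, 1 - Q j * (x (j + ℓ) / x (j + 1)) = x j / x (j + 1) := fun j hj =>
    one_sub_mul_div_of_advanced_eq heq (hpos _ (by linarith [hmem j hj])).ne'
  have hprod : x (n + 1) = x (n + ℓ) * ∏ j ∈ s, (1 - Q j * (x (j + ℓ) / x (j + 1))) := by
    rw [prod_congr rfl hratio]
    exact Int.eq_mul_prod_Ico_div (by omega) fun j hj => (hpos _ (by linarith [hmem j hj])).ne'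
  have hamgm := Real.sum_mul_prod_one_sub_le s (u := fun j => Q j * (x (j + ℓ) / x (j + 1)))
    (fun j hj => mul_nonneg (hQ j) (div_pos (hpos _ (by linarith [hmem j hj]))
      (hpos _ (by linarith [hmem j hj]))).le)
    (fun j hj => sub_nonneg.mp ((hratio j hj).symm ▸
      div_pos (hpos _ (hmem j hj)) (hpos _ (by linarith [hmem j hj]))).le)
  have hm : (((ℓ : ℝ) - 1) / ℓ) ^ ℓ = (#s / (#s + 1 : ℝ)) ^ (#s + 1) := by
    have hcard : #s + 1 = ℓ := by simp only [s, Int.card_Ico]; omega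
    rw [← hcard]; push_cast; ring
  have hxℓ : 0 < x (n + ℓ) := hpos _ (by omega)
  rw [← mul_div_assoc, le_div_iff₀ (hpos _ (by omega)), hm]
  calc (∑ j ∈ s, Q j * (x (j + ℓ) / x (j + 1))) * x (n + 1)
      = x (n + ℓ) * ((∑ j ∈ s, Q j * (x (j + ℓ) / x (j + 1))) *
          ∏ j ∈ s, (1 - Q j * (x (j + ℓ) / x (j + 1)))) := by rw [hprod]; ring
    _ ≤ x (n + ℓ) * (#s / (#s + 1 : ℝ)) ^ (#s + 1) := by gcongr
    _ = _ := mul_comm _ _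

theorem liminf_sum_Ico_le_of_advanced_eq (hℓ : 2 ≤ ℓ) (hQ : ∀ n, 0 ≤ Q n)
    (heq : ∀ n, x (n + 1) - x n - Q n * x (n + ℓ) = 0) (hpos : ∀ n, M ≤ n → 0 < x n) :
    liminf (fun n : ℤ => ∑ s ∈ Ico (n + 1) (n + ℓ), Q s) atTop ≤ (((ℓ : ℝ) - 1) / ℓ) ^ ℓ := by
  set m : ℝ := (((ℓ : ℝ) - 1) / ℓ) ^ ℓ
  set w : ℤ → ℝ := fun n => x (n + ℓ) / x (n + 1)
  have hm : 0 < m := pow_pos (div_pos (by norm_num; omega) (by positivity)) ℓ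
  by_contra! hlim
  obtain ⟨c, hmc, hc⟩ := exists_between hlim
  obtain ⟨N₀, hN₀⟩ := eventually_atTop.mp <| eventually_lt_of_lt_liminf hc <|
    isBoundedUnder_of ⟨0, fun n => sum_nonneg fun s _ => hQ s⟩
  set N := max M N₀
  have hmono := monotoneOn_of_advanced_eq hQ heq hpos
  have hw₁ : ∀ n, N ≤ n → 1 ≤ w n := fun n hn => by
    rw [one_le_div (hpos _ (by omega))]
    exact hmono (Set.mem_Ici.mpr (by omega)) (Set.mem_Ici.mpr (by omega)) (by omega)
  have hstep : ∀ a, 0 ≤ a → (∀ n, N ≤ n → a ≤ w n) → ∀ n, N ≤ n → c / m * a ≤ w n := by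
    intro a ha hA n hn
    rw [div_mul_eq_mul_div, div_le_iff₀' hm]
    calc c * a ≤ (∑ s ∈ Ico (n + 1) (n + ℓ), Q s) * a := by
          gcongr; exact (hN₀ n (by omega)).le
      _ ≤ ∑ j ∈ Ico (n + 1) (n + ℓ), Q j * w j := by
          rw [sum_mul]
          refine sum_le_sum fun j hj => mul_le_mul_of_nonneg_left (hA j ?_) (hQ j)
          simp only [mem_Ico] at hj; omega
      _ ≤ m * w n := sum_Ico_mul_div_le_of_advanced_eq (by omega) hQ heq hpos (by omega)
  have hiter : ∀ k : ℕ, ∀ n, N ≤ n → (c / m) ^ k ≤ w n := by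
    intro k
    induction k with
    | zero => simpa using hw₁
    | succ k ih => simpa [pow_succ'] using hstep _ (pow_pos (div_pos (hm.trans hmc) hm) k).le ih
  obtain ⟨k, hk⟩ := pow_unbounded_of_one_lt (w N) ((one_lt_div hm).mpr hmc)
  exact (hiter k N le_rfl).not_gt hk

theorem pos_or_neg_of_mul_add_one_pos {y : ℤ → ℝ} (h : ∀ n, M ≤ n → 0 < y n * y (n + 1)) :
    (∀ n, M ≤ n → 0 < y n) ∨ ∀ n, M ≤ n → y n < 0 := by
  rcases (pos_and_pos_or_neg_and_neg_of_mul_pos (h M le_rfl)).imp And.left And.left with hM | hM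
  · left
    intro n hn
    induction n, hn using Int.leInduction with
    | base => exact hM
    | succ n hn ih => exact pos_of_mul_pos_right (h n hn) ih.le
  · right
    intro n hn
    induction n, hn using Int.leInduction with
    | base => exact hM
    | succ n hn ih => exact neg_of_mul_pos_right (h n hn) ih.le

end AdvancedDifferenceEquation

theorem stmt_7_general (ℓ : ℕ) (hℓ : 2 ≤ ℓ) (Q : ℤ → ℝ) (hQ : ∀ n, 0 ≤ Q n)
    (hlim :
      (((ℓ : ℝ) - 1) / (ℓ : ℝ)) ^ ℓ <
        Filter.liminf (fun n : ℤ => ∑ s ∈ Finset.Ico (n + 1) (n + ℓ), Q s) Filter.atTop ∨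
      1 < Filter.limsup (fun n : ℤ => ∑ s ∈ Finset.Ico n (n + ℓ), Q s) Filter.atTop)
    (y : ℤ → ℝ)
    (heq : ∀ n : ℤ, y (n + 1) - y n - Q n * y (n + ℓ) = 0) :
    ∀ M : ℤ, ∃ n, M ≤ n ∧ y n * y (n + 1) ≤ 0 := by
  intro M
  by_contra! hnonosc
  have no_pos_solution : ∀ x : ℤ → ℝ, (∀ n, x (n + 1) - x n - Q n * x (n + ℓ) = 0) →
      (∀ n, M ≤ n → 0 < x n) → False := fun x hx hpos =>
    hlim.elim (liminf_sum_Ico_le_of_advanced_eq hℓ hQ hx hpos).not_gt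
      (limsup_sum_Ico_le_one_of_advanced_eq hQ hx hpos).not_gt
  rcases pos_or_neg_of_mul_add_one_pos hnonosc with hpos | hneg
  · exact no_pos_solution y heq hpos
  · exact no_pos_solution (-y) (fun n => by simp only [Pi.neg_apply]; linarith [heq n])
      fun n hn => neg_pos.mpr (hneg n hn)

/-- (Győri–Ladas) Oscillation criterion for the advanced difference equation
`Δ yₙ - Qₙ y_{n+ℓ} = 0`. -/
theorem stmt_7 (ℓ : ℕ) (hℓ : 2 ≤ ℓ) (Q : ℤ → ℝ) (hQ : ∀ n, 0 ≤ Q n)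
    (hlim :
      (((ℓ : ℝ) - 1) / (ℓ : ℝ)) ^ ℓ <
        Filter.liminf (fun n : ℤ => ∑ s ∈ Finset.Ico (n + 1) (n + ℓ), Q s) Filter.atTop ∨
      1 < Filter.limsup (fun n : ℤ => ∑ s ∈ Finset.Ico n (n + ℓ), Q s) Filter.atTop)
    (y : ℤ → ℝ)
    (heq : ∀ n : ℤ, y (n + 1) - y n - Q n * y (n + ℓ) = 0)
    (hne : ∃ n, y n ≠ 0) :
    ∀ M : ℤ, ∃ n, M ≤ n ∧ y n * y (n + 1) ≤ 0 :=
  stmt_7_general ℓ hℓ Q hQ hlim y heq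
end

section
/- Let $(a_n), (b_n)$ be real sequences with $a_n > 0$ and $b_n < 0$, $k \geq 1$, $\alpha_n = \prod_{j=n_0}^{n-1} a_j^{-1}$, and $Q^*_n = -\alpha_{n+1} b_n / \alpha_{n-k}$. If $\liminf_{n\to\infty} \sum_{j=n-k}^{n-1} Q^*_j > \left(\frac{k}{k+1}\right)^{k+1}$, then every solution of $z_{n+1} = a_n z_n + b_n z_{n-k}$ is oscillatory. -/
/-!
Put `y n = α n * z n`. Since `α (n + 1) = α n / a n`, the equation becomes
`y (n + 1) = y n - Q*ₙ y (n - k)` with `Q* ≥ 0`, and a nonoscillatory `z` yields, after a change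
of sign, an eventually positive solution `y` of this delay equation, which is then nonincreasing.
Pick `c` with `(k/(k+1))^(k+1) =: κ < c ≤ ∑_{n-k ≤ j < n} Q*_j` eventually. If
`R * y n ≤ y (n - k)` from some point on, then `y (j + 1) ≤ (1 - R Q*_j) y j` with positive
factors, which forces `R c < k`; telescoping over a window of length `k`, AM-GM and
`k x (1 - x)^k ≤ κ` (at `x = R c / k`) upgrade the ratio bound to `(c / κ) R`. Starting from
`R = 1` and iterating makes `R` unbounded, contradicting `R c < k`.
-/

open Finset Filter

theorem Real.prod_le_mean_pow {ι : Type*} (s : Finset ι) {t : ι → ℝ} (ht : ∀ i ∈ s, 0 ≤ t i) :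
    ∏ i ∈ s, t i ≤ ((∑ i ∈ s, t i) / #s) ^ #s := by
  rcases s.eq_empty_or_nonempty with rfl | hs
  · simp
  have hcard : (#s : ℝ) ≠ 0 := by exact_mod_cast hs.card_ne_zero
  have hmean := Real.geom_mean_le_arith_mean_weighted s (fun _ => (#s : ℝ)⁻¹) t
    (fun _ _ => by positivity) (by simp [hcard]) ht
  rw [Real.finsetProd_rpow s t ht, ← Finset.mul_sum, inv_mul_eq_div] at hmean
  calc ∏ i ∈ s, t i = ((∏ i ∈ s, t i) ^ (#s : ℝ)⁻¹) ^ #s :=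
        (Real.rpow_inv_natCast_pow (prod_nonneg ht) hs.card_ne_zero).symm
    _ ≤ ((∑ i ∈ s, t i) / #s) ^ #s := pow_le_pow_left₀ (Real.rpow_nonneg (prod_nonneg ht) _) hmean _

theorem natCast_mul_mul_one_sub_pow_le (k : ℕ) {x : ℝ} (hx₀ : 0 ≤ x) (hx₁ : x ≤ 1) :
    k * x * (1 - x) ^ k ≤ ((k : ℝ) / (k + 1)) ^ (k + 1) := by
  have h := Real.prod_le_mean_pow (range (k + 1)) (t := fun i => if i = 0 then k * x else 1 - x)
    (fun i _ => by split <;> [positivity; linarith])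
  simp only [prod_range_succ', sum_range_succ', if_pos, Nat.succ_ne_zero, if_false, prod_const,
    sum_const, card_range, nsmul_eq_mul] at h
  calc (k : ℝ) * x * (1 - x) ^ k = (1 - x) ^ k * (k * x) := by ring
    _ ≤ ((k * (1 - x) + k * x) / (k + 1 : ℕ)) ^ (k + 1) := h
    _ = ((k : ℝ) / (k + 1)) ^ (k + 1) := by push_cast; ring_nf

theorem le_prod_Ico_mul_of_succ_le {f g : ℤ → ℝ} {p : ℤ} (hg : ∀ n ≥ p, 0 ≤ g n)
    (hf : ∀ n ≥ p, f (n + 1) ≤ g n * f n) : ∀ n ≥ p, f n ≤ (∏ j ∈ Ico p n, g j) * f p := by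
  intro n hn
  induction n, hn using Int.leInduction with
  | base => simp
  | succ n hpn ih =>
    rw [← insert_Ico_right_eq_Ico_add_one hpn, prod_insert (by simp), mul_assoc]
    exact (hf n hpn).trans (mul_le_mul_of_nonneg_left ih (hg n hpn))

namespace DelayDiffEq

variable {k : ℕ} {Q y : ℤ → ℝ} {N : ℤ}

theorem antitoneOn (hQ : ∀ n ≥ N, 0 ≤ Q n) (hy : ∀ n ≥ N, 0 < y n)
    (hrec : ∀ n ≥ N, y (n + 1) = y n - Q n * y (n - k)) :
    AntitoneOn y (Set.Ici (N + k)) := by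
  rintro m (hm : N + k ≤ m) n - hmn
  induction n, hmn using Int.leInduction with
  | base => rfl
  | succ n hmn ih =>
    have := mul_nonneg (hQ n (by omega)) (hy (n - k) (by omega)).le
    linarith [hrec n (by omega)]

theorem succ_le_of_ratio {R : ℝ} (hQ : ∀ n ≥ N, 0 ≤ Q n) (hy : ∀ n ≥ N, 0 < y n)
    (hrec : ∀ n ≥ N, y (n + 1) = y n - Q n * y (n - k)) {n : ℤ} (hn : N ≤ n)
    (hratio : R * y n ≤ y (n - k)) :
    0 < 1 - R * Q n ∧ y (n + 1) ≤ (1 - R * Q n) * y n := by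
  have hstep : y (n + 1) ≤ (1 - R * Q n) * y n := by
    nlinarith [hrec n hn, mul_le_mul_of_nonneg_left hratio (hQ n hn)]
  refine ⟨?_, hstep⟩
  by_contra! h
  nlinarith [hy n hn, hy (n + 1) (by omega)]

theorem mul_sum_lt_of_ratio {R : ℝ} (hk : 0 < k) (hQ : ∀ n ≥ N, 0 ≤ Q n) (hy : ∀ n ≥ N, 0 < y n)
    (hrec : ∀ n ≥ N, y (n + 1) = y n - Q n * y (n - k)) {N' : ℤ} (hN' : N ≤ N')
    (hratio : ∀ n ≥ N', R * y n ≤ y (n - k)) {n : ℤ} (hn : N' + k ≤ n) :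
    R * ∑ j ∈ Ico (n - k) n, Q j < k := by
  have hpos : 0 < ∑ j ∈ Ico (n - k) n, (1 - R * Q j) :=
    sum_pos (fun j hj => have := mem_Ico.1 hj
      (succ_le_of_ratio hQ hy hrec (by omega) (hratio j (by omega))).1)
      (nonempty_Ico.2 (by omega))
  simpa [sum_sub_distrib, mul_sum] using hpos

theorem mul_le_of_ratio {R c : ℝ} (hk : 0 < k) (hR : 0 ≤ R) (hc : 0 ≤ c)
    (hQ : ∀ n ≥ N, 0 ≤ Q n) (hy : ∀ n ≥ N, 0 < y n)
    (hrec : ∀ n ≥ N, y (n + 1) = y n - Q n * y (n - k))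
    (hS : ∀ n ≥ N, c ≤ ∑ j ∈ Ico (n - k) n, Q j) {N' : ℤ} (hN' : N ≤ N')
    (hratio : ∀ n ≥ N', R * y n ≤ y (n - k)) {n : ℤ} (hn : N' + k ≤ n) :
    R * c * y n ≤ ((k : ℝ) / (k + 1)) ^ (k + 1) * y (n - k) := by
  have hkR : (0 : ℝ) < k := by exact_mod_cast hk
  have hstep (j) (hj : j ≥ n - k) :=
    succ_le_of_ratio hQ hy hrec (R := R) (n := j) (by omega) (hratio j (by omega))
  set x := R * c / k
  have hRS := mul_sum_lt_of_ratio hk hQ hy hrec hN' hratio hn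
  have hRc : R * c ≤ R * ∑ j ∈ Ico (n - k) n, Q j :=
    mul_le_mul_of_nonneg_left (hS n (by omega)) hR
  have hx₀ : 0 ≤ x := by positivity
  have hx₁ : x ≤ 1 := by rw [div_le_one hkR]; linarith
  have hprod : ∏ j ∈ Ico (n - k) n, (1 - R * Q j) ≤ (1 - x) ^ k := by
    have hmean := Real.prod_le_mean_pow (Ico (n - k) n)
      (fun j hj => (hstep j (mem_Ico.1 hj).1).1.le)
    have hcard : #(Ico (n - k) n) = k := by simp
    rw [hcard, sum_sub_distrib, sum_const, hcard, nsmul_one, ← mul_sum] at hmean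
    refine hmean.trans (pow_le_pow_left₀ (div_nonneg (by linarith) hkR.le) ?_ k)
    rw [div_le_iff₀ hkR, sub_mul, one_mul, div_mul_cancel₀ _ hkR.ne']
    linarith
  have htel := le_prod_Ico_mul_of_succ_le (p := n - k) (g := fun j => 1 - R * Q j)
    (fun j hj => (hstep j hj).1.le) (fun j hj => (hstep j hj).2) n (by omega)
  have hyk : 0 ≤ y (n - k) := (hy _ (by omega)).le
  calc R * c * y n = k * x * y n := by rw [mul_div_cancel₀ _ hkR.ne']
    _ ≤ k * x * ((1 - x) ^ k * y (n - k)) := by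
      gcongr
      exact htel.trans (mul_le_mul_of_nonneg_right hprod hyk)
    _ = k * x * (1 - x) ^ k * y (n - k) := by ring
    _ ≤ ((k : ℝ) / (k + 1)) ^ (k + 1) * y (n - k) :=
      mul_le_mul_of_nonneg_right (natCast_mul_mul_one_sub_pow_le k hx₀ hx₁) hyk

theorem exists_ratio_pow_le {c : ℝ} (hk : 0 < k) (hc : ((k : ℝ) / (k + 1)) ^ (k + 1) < c)
    (hQ : ∀ n ≥ N, 0 ≤ Q n) (hy : ∀ n ≥ N, 0 < y n)
    (hrec : ∀ n ≥ N, y (n + 1) = y n - Q n * y (n - k))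
    (hS : ∀ n ≥ N, c ≤ ∑ j ∈ Ico (n - k) n, Q j) (m : ℕ) :
    ∃ N' ≥ N, ∀ n ≥ N', (c / ((k : ℝ) / (k + 1)) ^ (k + 1)) ^ m * y n ≤ y (n - k) := by
  set κ : ℝ := ((k : ℝ) / (k + 1)) ^ (k + 1)
  have hκ : 0 < κ := by positivity
  induction m with
  | zero =>
    refine ⟨N + k + k, by omega, fun n hn => ?_⟩
    simpa using antitoneOn hQ hy hrec (Set.mem_Ici.2 (by omega)) (Set.mem_Ici.2 (by omega))
      (by omega)
  | succ m ih =>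
    obtain ⟨N', hN', hratio⟩ := ih
    refine ⟨N' + k, by omega, fun n hn => ?_⟩
    have hc₀ : 0 < c := hκ.trans hc
    have hstep := mul_le_of_ratio hk (by positivity) hc₀.le hQ hy hrec hS hN' hratio hn
    calc (c / κ) ^ (m + 1) * y n = (c / κ) ^ m * c * y n / κ := by ring
      _ ≤ κ * y (n - k) / κ := by gcongr
      _ = y (n - k) := by field_simp

theorem false_of_pos_solution {c : ℝ} (hk : 0 < k) (hc : ((k : ℝ) / (k + 1)) ^ (k + 1) < c)
    (hQ : ∀ n ≥ N, 0 ≤ Q n) (hy : ∀ n ≥ N, 0 < y n)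
    (hrec : ∀ n ≥ N, y (n + 1) = y n - Q n * y (n - k))
    (hS : ∀ n ≥ N, c ≤ ∑ j ∈ Ico (n - k) n, Q j) : False := by
  have hκ : 0 < ((k : ℝ) / (k + 1)) ^ (k + 1) := by positivity
  have hc₀ : 0 < c := hκ.trans hc
  obtain ⟨m, hm⟩ := pow_unbounded_of_one_lt (k / c) ((one_lt_div hκ).2 hc)
  obtain ⟨N', hN', hratio⟩ := exists_ratio_pow_le hk hc hQ hy hrec hS m
  have hlt := mul_sum_lt_of_ratio hk hQ hy hrec hN' hratio le_rfl
  have hle := mul_le_mul_of_nonneg_left (hS (N' + k) (by omega))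
    (pow_nonneg (div_pos hc₀ hκ).le m)
  rw [div_lt_iff₀ hc₀] at hm
  linarith

end DelayDiffEq

theorem pos_or_neg_of_mul_succ_pos {z : ℤ → ℝ} {M : ℤ} (h : ∀ n ≥ M, 0 < z n * z (n + 1)) :
    (∀ n ≥ M, 0 < z n) ∨ (∀ n ≥ M, z n < 0) := by
  have hsame : ∀ n ≥ M, 0 < z M * z n := by
    intro n hn
    induction n, hn using Int.leInduction with
    | base => exact mul_self_pos.2 fun h0 => by simpa [h0] using h M le_rfl
    | succ n hMn ih =>
      have hprod : 0 < z n * z n * (z M * z (n + 1)) := by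
        nlinarith [mul_pos ih (h n hMn)]
      exact pos_of_mul_pos_right hprod (mul_self_nonneg _)
  rcases (left_ne_zero_of_mul (hsame M le_rfl).ne').lt_or_gt with hneg | hpos
  · exact .inr fun n hn => neg_of_mul_pos_right (hsame n hn) hneg.le
  · exact .inl fun n hn => pos_of_mul_pos_right (hsame n hn) hpos.le

theorem stmt_12_general (n0 : ℤ) (k : ℕ) (hk : 1 ≤ k) (a b : ℤ → ℝ)
    (ha : ∀ n, 0 < a n) (hb : ∀ n, b n < 0)
    (α Qs : ℤ → ℝ)
    (hα : ∀ n, α n = ∏ j ∈ Finset.Ico n0 n, (a j)⁻¹)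
    (hQs : ∀ n, Qs n = -(α (n + 1) * b n / α (n - k)))
    (hlim : ((k : ℝ) / ((k : ℝ) + 1)) ^ (k + 1) <
      Filter.liminf (fun n : ℤ => ∑ j ∈ Finset.Ico (n - k) n, Qs j) Filter.atTop)
    (z : ℤ → ℝ)
    (heq : ∀ n : ℤ, z (n + 1) = a n * z n + b n * z (n - k)) :
    ∀ M : ℤ, ∃ n, M ≤ n ∧ z n * z (n + 1) ≤ 0 := by
  intro M
  by_contra! hM
  have hα_pos (n : ℤ) : 0 < α n := hα n ▸ prod_pos fun j _ => inv_pos.2 (ha j)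
  have hQ (n : ℤ) : 0 ≤ Qs n := by
    rw [hQs, neg_nonneg]
    exact div_nonpos_of_nonpos_of_nonneg (mul_nonpos_of_nonneg_of_nonpos (hα_pos _).le (hb n).le)
      (hα_pos _).le
  obtain ⟨c, hκc, hc⟩ := exists_between hlim
  obtain ⟨N, hN⟩ := eventually_atTop.1 <| eventually_lt_of_lt_liminf hc <|
    isBoundedUnder_of_eventually_ge <| .of_forall fun n => sum_nonneg fun j _ => hQ j
  have no_pos_solution (w : ℤ → ℝ) (hw : ∀ n, w (n + 1) = a n * w n + b n * w (n - k))
      (hpos : ∀ n ≥ M, 0 < w n) : False := by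
    refine DelayDiffEq.false_of_pos_solution (N := max (max M n0) N) (y := α * w) hk hκc
      (fun n _ => hQ n) (fun n hn => mul_pos (hα_pos n) (hpos n (by omega))) (fun n hn => ?_)
      (fun n hn => (hN n (by omega)).le)
    have hα_succ : α (n + 1) = (a n)⁻¹ * α n := by
      rw [hα, hα, ← insert_Ico_right_eq_Ico_add_one (by omega), prod_insert (by simp)]
    simp only [Pi.mul_apply, hw n, hQs n, hα_succ]
    field_simp [(ha n).ne', (hα_pos (n - k)).ne']
    ring
  rcases pos_or_neg_of_mul_succ_pos hM with hpos | hneg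
  · exact no_pos_solution z heq hpos
  · exact no_pos_solution (-z) (fun n => by simp only [Pi.neg_apply, heq n]; ring)
      fun n hn => neg_pos.2 (hneg n hn)

/-- Ladas–Philos–Sficas-type criterion for `z_{n+1} = aₙ zₙ + bₙ z_{n-k}`. -/
theorem stmt_12 (n0 : ℤ) (k : ℕ) (hk : 1 ≤ k) (a b : ℤ → ℝ)
    (ha : ∀ n, 0 < a n) (hb : ∀ n, b n < 0)
    (α Qs : ℤ → ℝ)
    (hα : ∀ n, α n = ∏ j ∈ Finset.Ico n0 n, (a j)⁻¹)
    (hQs : ∀ n, Qs n = -(α (n + 1) * b n / α (n - k)))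
    (hlim : ((k : ℝ) / ((k : ℝ) + 1)) ^ (k + 1) <
      Filter.liminf (fun n : ℤ => ∑ j ∈ Finset.Ico (n - k) n, Qs j) Filter.atTop)
    (z : ℤ → ℝ)
    (heq : ∀ n : ℤ, z (n + 1) = a n * z n + b n * z (n - k))
    (hne : ∃ n, z n ≠ 0) :
    ∀ M : ℤ, ∃ n, M ≤ n ∧ z n * z (n + 1) ≤ 0 :=
  stmt_12_general n0 k hk a b ha hb α Qs hα hQs hlim z heq
end
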